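/- Let U ⊆ ℂⁿ be open, f, s holomorphic on U with f/s holomorphic, φ : U → [-∞,∞) measurable, and 0 < ε < 2. If ∫_U |f|²·|s|^{-2(1-ε/2)}·e^{-2(1+ε)φ} dλ < ∞ and ∫_V |f|²·|s|^{-α} dλ < ∞ on some V ⋐ U for α = (10ε+ε²)/(3ε) < 4, then ∫_V |f|²·|s|^{-2}·e^{-2(1+ε/4)φ} dλ < ∞. -/

import Mathlib

/-!
Write `A = |f|²|s|^{-2(1-ε/2)}e^{-2(1+ε)φ}` and `B = |f|²|s|^{-α}`. With the weight
`w = (1+ε/4)/(1+ε) = 1/p` and `1 - w = 1/q`, the choice of `α` makes the target integrand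
equal to `A^w B^{1-w}` pointwise, and the weighted AM–GM (Young) inequality bounds this by
`wA + (1-w)B ≤ A + B`. Both summands are integrable on `V ⊆ U`.
-/

open MeasureTheory ENNReal Real

lemma mul_rpow_mul_exp_le_add {a t w e₁ e₂ u : ℝ} (ha : 0 ≤ a) (ht : 0 ≤ t)
    (hw₀ : 0 ≤ w) (hw₁ : w ≤ 1) (he : w * e₁ + (1 - w) * e₂ ≠ 0) :
    a * t ^ (w * e₁ + (1 - w) * e₂) * exp (w * u) ≤ a * t ^ e₁ * exp u + a * t ^ e₂ := by
  set A := a * t ^ e₁ * exp u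
  set B := a * t ^ e₂
  have hA : 0 ≤ A := by positivity
  have hB : 0 ≤ B := by positivity
  have hfactor : a * t ^ (w * e₁ + (1 - w) * e₂) * exp (w * u) = A ^ w * B ^ (1 - w) := by
    have ha' : a = a ^ w * a ^ (1 - w) := by
      rw [← rpow_add' ha (by norm_num), add_sub_cancel, Real.rpow_one]
    rw [mul_rpow (by positivity) (exp_nonneg _), mul_rpow ha (by positivity),
      mul_rpow ha (by positivity), ← rpow_mul ht, ← rpow_mul ht, ← exp_mul,
      rpow_add' ht he]
    nth_rw 1 [ha']
    ring_nf
  calc a * t ^ (w * e₁ + (1 - w) * e₂) * exp (w * u)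
      = A ^ w * B ^ (1 - w) := hfactor
    _ ≤ w * A + (1 - w) * B :=
        geom_mean_le_arith_mean2_weighted hw₀ (by linarith) hA hB (by ring)
    _ ≤ A + B := by nlinarith

lemma sq_mul_rpow_neg_two_mul_exp_le {ε : ℝ} (hε : 0 < ε) (a t c : ℝ) (ht : 0 ≤ t) :
    a ^ 2 * t ^ (-(2 : ℝ)) * exp (-2 * (1 + ε / 4) * c) ≤
      a ^ 2 * t ^ (-(2 * (1 - ε / 2))) * exp (-2 * (1 + ε) * c) +
        a ^ 2 * t ^ (-((10 * ε + ε ^ 2) / (3 * ε))) := by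
  set w := (1 + ε / 4) / (1 + ε)
  have hexp : w * -(2 * (1 - ε / 2)) + (1 - w) * -((10 * ε + ε ^ 2) / (3 * ε)) = -2 := by
    simp only [w]
    field_simp
    ring
  have hphi : w * (-2 * (1 + ε) * c) = -2 * (1 + ε / 4) * c := by
    simp only [w]
    field_simp
  have hw₁ : w ≤ 1 := by
    rw [div_le_one (by positivity)]
    linarith
  have hbound := mul_rpow_mul_exp_le_add (u := -2 * (1 + ε) * c) (sq_nonneg a) ht (by positivity) hw₁
    (by rw [hexp]; norm_num)
  rwa [hexp, hphi] at hbound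

lemma lintegral_lt_top_of_le_add {α : Type*} [MeasurableSpace α] {μ : Measure α}
    {f g h : α → ℝ≥0∞} (hh : AEMeasurable h μ) (hfgh : ∀ x, f x ≤ g x + h x)
    (hg : ∫⁻ x, g x ∂μ < ⊤) (hh' : ∫⁻ x, h x ∂μ < ⊤) : ∫⁻ x, f x ∂μ < ⊤ := by
  calc ∫⁻ x, f x ∂μ ≤ ∫⁻ x, g x + h x ∂μ := lintegral_mono hfgh
    _ = ∫⁻ x, g x ∂μ + ∫⁻ x, h x ∂μ := lintegral_add_right' g hh
    _ < ⊤ := add_lt_top.2 ⟨hg, hh'⟩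

theorem stmt12_general (n : ℕ) (U : Set (Fin n → ℂ))
    (f s : (Fin n → ℂ) → ℂ) (φ : (Fin n → ℂ) → ℝ)
    (hf : DifferentiableOn ℂ f U) (hs : DifferentiableOn ℂ s U)
    (ε : ℝ) (hε0 : 0 < ε)
    (V : Set (Fin n → ℂ)) (hV : IsOpen V) (hVU : closure V ⊆ U)
    (h1 : ∫⁻ x in U,
        ENNReal.ofReal (‖f x‖ ^ 2 * ‖s x‖ ^ (-(2 * (1 - ε / 2))) *
          exp (-2 * (1 + ε) * φ x)) < ⊤)
    (h2 : ∫⁻ x in V,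
        ENNReal.ofReal (‖f x‖ ^ 2 * ‖s x‖ ^ (-((10 * ε + ε ^ 2) / (3 * ε)))) < ⊤) :
    ∫⁻ x in V,
        ENNReal.ofReal (‖f x‖ ^ 2 * ‖s x‖ ^ (-(2 : ℝ)) *
          exp (-2 * (1 + ε / 4) * φ x)) < ⊤ := by
  have hVU' : V ⊆ U := subset_closure.trans hVU
  have hmeas (g : (Fin n → ℂ) → ℂ) (hg : DifferentiableOn ℂ g U) :
      AEMeasurable (fun x => ‖g x‖) (volume.restrict V) :=
    (hg.continuousOn.mono hVU').norm.aemeasurable hV.measurableSet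
  have hB : AEMeasurable (fun x =>
      ENNReal.ofReal (‖f x‖ ^ 2 * ‖s x‖ ^ (-((10 * ε + ε ^ 2) / (3 * ε))))) (volume.restrict V) :=
    (((hmeas f hf).pow_const 2).mul ((hmeas s hs).pow_const _)).ennreal_ofReal
  refine lintegral_lt_top_of_le_add hB (fun x => ?_) ((lintegral_mono_set hVU').trans_lt h1) h2
  rw [← ofReal_add (by positivity) (by positivity)]
  exact ofReal_le_ofReal (sq_mul_rpow_neg_two_mul_exp_le hε0 _ _ _ (norm_nonneg _))

/-- The Hölder interpolation (1.7) in the proof of Lemma 4.1 (iii): for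
`f, s` holomorphic on open `U ⊆ ℂⁿ` with `f/s` holomorphic, `φ` measurable,
`0 < ε < 2` and `α = (10ε+ε²)/(3ε) < 4`: if
`∫_U |f|²|s|^{-2(1-ε/2)}e^{-2(1+ε)φ} < ∞` and `∫_V |f|²|s|^{-α} < ∞` on some
relatively compact open `V ⋐ U`, then `∫_V |f|²|s|^{-2}e^{-2(1+ε/4)φ} < ∞`. -/
theorem stmt12 (n : ℕ) (U : Set (Fin n → ℂ)) (hU : IsOpen U)
    (f s : (Fin n → ℂ) → ℂ) (φ : (Fin n → ℂ) → ℝ)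
    (hf : DifferentiableOn ℂ f U) (hs : DifferentiableOn ℂ s U)
    (hφ : Measurable φ)
    (hdiv : ∃ g : (Fin n → ℂ) → ℂ, DifferentiableOn ℂ g U ∧
      ∀ x ∈ U, f x = s x * g x)
    (ε : ℝ) (hε0 : 0 < ε) (hε2 : ε < 2)
    (V : Set (Fin n → ℂ)) (hV : IsOpen V) (hVU : closure V ⊆ U)
    (hVc : IsCompact (closure V))
    (h1 : ∫⁻ x in U,
        ENNReal.ofReal (‖f x‖ ^ 2 * ‖s x‖ ^ (-(2 * (1 - ε / 2))) *
          exp (-2 * (1 + ε) * φ x)) < ⊤)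
    (h2 : ∫⁻ x in V,
        ENNReal.ofReal (‖f x‖ ^ 2 * ‖s x‖ ^ (-((10 * ε + ε ^ 2) / (3 * ε)))) < ⊤) :
    ∫⁻ x in V,
        ENNReal.ofReal (‖f x‖ ^ 2 * ‖s x‖ ^ (-(2 : ℝ)) *
          exp (-2 * (1 + ε / 4) * φ x)) < ⊤ :=
  stmt12_general n U f s φ hf hs ε hε0 V hV hVU h1 h2
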